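/- arXiv:2003.04302 — 3 statements merged into one kernel-verified Lean document; each statement's English description precedes it below -/
import Mathlib

section
/- Deterministic/expected-value form of the STORM-PG convergence theorem (Theorem 5.1): Let f : E → ℝ be differentiable with L_d-Lipschitz gradient and bounded above by f*. Let η > 0 satisfy η·L_d ≤ 1/2, let α ∈ (0,1], and let constants C_γ ≥ 0, B > 0, S_0 > 0, σ ≥ 0 satisfy 4·C_γ²·η² ≤ α·B. Let ξ_t, g_t (t = 0,1,…,T) be sequences in E with ξ_{t+1} = ξ_t + η·g_t, and set e_t := ‖g_t − ∇f(ξ_t)‖². Assume e_0 ≤ σ²/S_0 and, for every t < T, e_{t+1} ≤ (1−α)²·e_t + (2η²(1−α)²C_γ²/B)·‖g_t‖² + 2α²σ²/B. Then for every T ≥ 1, (1/T)·Σ_{t=0}^{T−1} ‖∇f(ξ_t)‖² ≤ 2(f* − f(ξ_0))/(η·T) + 2·α·σ²/B + (2/T)·σ²/(S_0·α). -/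
/-!
The Lyapunov function is Φ_t = f(ξ_t) − η/(2α)·e_t. The descent lemma for the L_d-smooth f with
ηL_d ≤ 1/2 gives f(ξ_{t+1}) − f(ξ_t) ≥ η/2·‖∇f(ξ_t)‖² − η/2·e_t + η/4·‖g_t‖², while the error
recursion, with (1−α)² ≤ 1−α and 4C_γ²η² ≤ αB, gives
η/(2α)·(e_t − e_{t+1}) ≥ η/2·e_t − η/4·‖g_t‖² − ηασ²/B. So Φ gains at least
η/2·‖∇f(ξ_t)‖² − ηασ²/B per step, and telescoping with Φ_T ≤ f* and
Φ_0 ≥ f(ξ_0) − ησ²/(2αS₀) gives the bound.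
-/

open Finset
open scoped RealInnerProductSpace

section LipschitzGradient

variable {E : Type*} [NormedAddCommGroup E] [InnerProductSpace ℝ E] [CompleteSpace E]
  {f : E → ℝ} {L : ℝ}

theorem le_apply_add_of_lipschitz_gradient (hf : Differentiable ℝ f)
    (hlip : ∀ x y, ‖gradient f x - gradient f y‖ ≤ L * ‖x - y‖) (x v : E) :
    f x + ⟪gradient f x, v⟫ - L / 2 * ‖v‖ ^ 2 ≤ f (x + v) := by
  set G : ℝ → ℝ := fun t => f (x + t • v) - t * ⟪gradient f x, v⟫ + L / 2 * t ^ 2 * ‖v‖ ^ 2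
  have hG : ∀ t : ℝ,
      HasDerivAt G (⟪gradient f (x + t • v) - gradient f x, v⟫ + L * t * ‖v‖ ^ 2) t := by
    intro t
    have hline : HasDerivAt (fun t : ℝ => x + t • v) v t := by
      simpa using ((hasDerivAt_id t).smul_const v).const_add x
    have hcomp := (hf (x + t • v)).hasFDerivAt.comp_hasDerivAt t hline
    rw [← inner_gradient_left] at hcomp
    refine ((hcomp.sub (hasDerivAt_mul_const _)).add
      (((hasDerivAt_pow 2 t).const_mul (L / 2)).mul_const (‖v‖ ^ 2))).congr_deriv ?_
    rw [inner_sub_left]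
    ring
  have hG_nonneg : ∀ t : ℝ, 0 ≤ t →
      0 ≤ ⟪gradient f (x + t • v) - gradient f x, v⟫ + L * t * ‖v‖ ^ 2 := by
    intro t ht
    have hgrad : ‖gradient f (x + t • v) - gradient f x‖ ≤ L * (t * ‖v‖) := by
      simpa [norm_smul, abs_of_nonneg ht] using hlip (x + t • v) x
    nlinarith [neg_le_of_abs_le (abs_real_inner_le_norm (gradient f (x + t • v) - gradient f x) v),
      mul_le_mul_of_nonneg_right hgrad (norm_nonneg v)]
  have hmono : MonotoneOn G (Set.Ici 0) := by
    refine monotoneOn_of_hasDerivWithinAt_nonneg (convex_Ici 0)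
      (fun t _ => (hG t).continuousAt.continuousWithinAt) (fun t _ => (hG t).hasDerivWithinAt) ?_
    rw [interior_Ici]
    exact fun t ht => hG_nonneg t (le_of_lt ht)
  have h01 := hmono Set.self_mem_Ici (Set.mem_Ici.2 zero_le_one) zero_le_one
  simp only [G, zero_smul, add_zero, zero_mul, sub_zero, one_smul, one_mul, one_pow,
    ne_eq, OfNat.ofNat_ne_zero, not_false_eq_true, zero_pow, mul_zero] at h01
  linarith

theorem le_apply_add_smul_of_lipschitz_gradient (hf : Differentiable ℝ f)
    (hlip : ∀ x y, ‖gradient f x - gradient f y‖ ≤ L * ‖x - y‖) {η : ℝ} (hη : 0 ≤ η)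
    (hηL : η * L ≤ 1 / 2) (x g : E) :
    f x + η / 2 * ‖gradient f x‖ ^ 2 - η / 2 * ‖g - gradient f x‖ ^ 2 + η / 4 * ‖g‖ ^ 2 ≤
      f (x + η • g) := by
  have hdesc := le_apply_add_of_lipschitz_gradient hf hlip x (η • g)
  rw [real_inner_smul_right, norm_smul, Real.norm_eq_abs, abs_of_nonneg hη] at hdesc
  have hpolar := norm_sub_sq_real g (gradient f x)
  rw [real_inner_comm] at hpolar
  nlinarith [mul_le_mul_of_nonneg_left hηL (mul_nonneg hη (sq_nonneg ‖g‖))]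

end LipschitzGradient

theorem lyapunov_increment_ge {η α c d F₀ F₁ e₀ e₁ a G : ℝ} (hη : 0 ≤ η) (hα₀ : 0 < α)
    (hα₁ : α ≤ 1) (hc : c ≤ α / 2) (he₀ : 0 ≤ e₀) (hG : 0 ≤ G)
    (hF : F₀ + η / 2 * a - η / 2 * e₀ + η / 4 * G ≤ F₁)
    (he : e₁ ≤ (1 - α) ^ 2 * e₀ + c * G + d) :
    η / 2 * a - η / (2 * α) * d ≤ (F₁ - η / (2 * α) * e₁) - (F₀ - η / (2 * α) * e₀) := by
  have he' : e₁ ≤ (1 - α) * e₀ + α / 2 * G + d := by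
    nlinarith [mul_nonneg (mul_nonneg hα₀.le (sub_nonneg.2 hα₁)) he₀,
      mul_le_mul_of_nonneg_right hc hG]
  have hscaled := mul_le_mul_of_nonneg_left he' (by positivity : 0 ≤ η / (2 * α))
  have hexpand : η / (2 * α) * ((1 - α) * e₀ + α / 2 * G + d) =
      η / (2 * α) * e₀ - η / 2 * e₀ + η / 4 * G + η / (2 * α) * d := by
    field_simp
    ring
  linarith

theorem storm_pg_convergence_general
    {E : Type*} [NormedAddCommGroup E] [InnerProductSpace ℝ E] [CompleteSpace E]
    (f : E → ℝ) (fstar : ℝ) (L_d : ℝ)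
    (hdiff : Differentiable ℝ f)
    (hlip : ∀ x y : E, ‖gradient f x - gradient f y‖ ≤ L_d * ‖x - y‖)
    (hbdd : ∀ x : E, f x ≤ fstar)
    (η : ℝ) (hη : 0 < η) (hηL : η * L_d ≤ 1 / 2)
    (α : ℝ) (hα0 : 0 < α) (hα1 : α ≤ 1)
    (C_γ : ℝ) (B : ℝ) (hB : 0 < B) (S₀ : ℝ) (hS₀ : 0 < S₀)
    (σ : ℝ) (hparam : 4 * C_γ ^ 2 * η ^ 2 ≤ α * B)
    (ξ g : ℕ → E) (hupd : ∀ t : ℕ, ξ (t + 1) = ξ t + η • g t)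
    (T : ℕ) (hT : 1 ≤ T)
    (hinit : ‖g 0 - gradient f (ξ 0)‖ ^ 2 ≤ σ ^ 2 / S₀)
    (hrec : ∀ t < T, ‖g (t + 1) - gradient f (ξ (t + 1))‖ ^ 2 ≤
      (1 - α) ^ 2 * ‖g t - gradient f (ξ t)‖ ^ 2
        + (2 * η ^ 2 * (1 - α) ^ 2 * C_γ ^ 2 / B) * ‖g t‖ ^ 2
        + 2 * α ^ 2 * σ ^ 2 / B) :
    (1 / (T : ℝ)) * ∑ t ∈ range T, ‖gradient f (ξ t)‖ ^ 2 ≤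
      2 * (fstar - f (ξ 0)) / (η * T) + 2 * α * σ ^ 2 / B
        + (2 / (T : ℝ)) * (σ ^ 2 / (S₀ * α)) := by
  set Φ : ℕ → ℝ := fun t => f (ξ t) - η / (2 * α) * ‖g t - gradient f (ξ t)‖ ^ 2
  have hc : 2 * η ^ 2 * (1 - α) ^ 2 * C_γ ^ 2 / B ≤ α / 2 := by
    rw [div_le_iff₀ hB]
    nlinarith [mul_le_mul_of_nonneg_left (show (1 - α) ^ 2 ≤ 1 by nlinarith)
      (by positivity : 0 ≤ 2 * η ^ 2 * C_γ ^ 2)]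
  have hstep : ∀ t < T, η / 2 * ‖gradient f (ξ t)‖ ^ 2 - η / (2 * α) * (2 * α ^ 2 * σ ^ 2 / B) ≤
      Φ (t + 1) - Φ t := fun t ht =>
    lyapunov_increment_ge hη.le hα0 hα1 hc (sq_nonneg _) (sq_nonneg _)
      (hupd t ▸ le_apply_add_smul_of_lipschitz_gradient hdiff hlip hη.le hηL (ξ t) (g t))
      (hrec t ht)
  have hsum := (sum_le_sum fun t ht => hstep t (mem_range.1 ht)).trans_eq (sum_range_sub Φ T)
  have hΦT : Φ T ≤ fstar := (sub_le_self _ (by positivity)).trans (hbdd _)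
  have hΦ0 : f (ξ 0) - η / (2 * α) * (σ ^ 2 / S₀) ≤ Φ 0 :=
    sub_le_sub_left (mul_le_mul_of_nonneg_left hinit (by positivity)) _
  rw [sum_sub_distrib, ← mul_sum, sum_const, card_range, nsmul_eq_mul] at hsum
  have hTpos : (0 : ℝ) < T := by exact_mod_cast hT
  rw [one_div_mul_eq_div, div_le_iff₀ hTpos]
  refine le_of_mul_le_mul_left ?_ (half_pos hη)
  have hslack : 0 ≤ η / (2 * α) * (σ ^ 2 / S₀) := by positivity
  have hrhs : η / 2 * ((2 * (fstar - f (ξ 0)) / (η * T) + 2 * α * σ ^ 2 / B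
        + (2 / (T : ℝ)) * (σ ^ 2 / (S₀ * α))) * T) =
      fstar - f (ξ 0) + T * (η / (2 * α) * (2 * α ^ 2 * σ ^ 2 / B))
        + 2 * (η / (2 * α) * (σ ^ 2 / S₀)) := by
    field_simp
  rw [hrhs]
  linarith

/-- Deterministic/expected-value form of the STORM-PG convergence theorem (Theorem 5.1). -/
theorem storm_pg_convergence
    {E : Type*} [NormedAddCommGroup E] [InnerProductSpace ℝ E] [CompleteSpace E]
    (f : E → ℝ) (fstar : ℝ) (L_d : ℝ) (hL_d : 0 < L_d)
    (hdiff : Differentiable ℝ f)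
    (hlip : ∀ x y : E, ‖gradient f x - gradient f y‖ ≤ L_d * ‖x - y‖)
    (hbdd : ∀ x : E, f x ≤ fstar)
    (η : ℝ) (hη : 0 < η) (hηL : η * L_d ≤ 1 / 2)
    (α : ℝ) (hα0 : 0 < α) (hα1 : α ≤ 1)
    (C_γ : ℝ) (hC : 0 ≤ C_γ) (B : ℝ) (hB : 0 < B) (S₀ : ℝ) (hS₀ : 0 < S₀)
    (σ : ℝ) (hσ : 0 ≤ σ) (hparam : 4 * C_γ ^ 2 * η ^ 2 ≤ α * B)
    (ξ g : ℕ → E) (hupd : ∀ t : ℕ, ξ (t + 1) = ξ t + η • g t)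
    (T : ℕ) (hT : 1 ≤ T)
    (hinit : ‖g 0 - gradient f (ξ 0)‖ ^ 2 ≤ σ ^ 2 / S₀)
    (hrec : ∀ t < T, ‖g (t + 1) - gradient f (ξ (t + 1))‖ ^ 2 ≤
      (1 - α) ^ 2 * ‖g t - gradient f (ξ t)‖ ^ 2
        + (2 * η ^ 2 * (1 - α) ^ 2 * C_γ ^ 2 / B) * ‖g t‖ ^ 2
        + 2 * α ^ 2 * σ ^ 2 / B) :
    (1 / (T : ℝ)) * ∑ t ∈ range T, ‖gradient f (ξ t)‖ ^ 2 ≤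
      2 * (fstar - f (ξ 0)) / (η * T) + 2 * α * σ ^ 2 / B
        + (2 / (T : ℝ)) * (σ ^ 2 / (S₀ * α)) :=
  storm_pg_convergence_general f fstar L_d hdiff hlip hbdd η hη hηL α hα0 hα1 C_γ B hB S₀ hS₀ σ
    hparam ξ g hupd T hT hinit hrec
end

section
/- Corollary (IFO complexity parameter choice): In the setting of the deterministic STORM-PG convergence theorem, let ε > 0, σ > 0, C_γ > 0, B > 0 be given, and choose α = ε²·B/(6σ²) (assumed ≤ 1), η = ε·B/(2·√6·σ·C_γ) (assumed to satisfy η·L_d ≤ 1/2), and any S_0 > 0. Then 4·C_γ²·η² = α·B and 2·α·σ²/B = ε²/3; moreover, if T ≥ max( 6·(f* − f(ξ_0))/(η·ε²), 6·σ²/(S_0·α·ε²) ), then (1/T)·Σ_{t=0}^{T−1} ‖∇f(ξ_t)‖² ≤ ε². -/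
/-!
By `L`-smoothness each step gains
`f(ξₜ₊₁) ≥ f(ξₜ) + η/2 ‖∇f(ξₜ)‖² + η/4 ‖gₜ‖² - η/2 eₜ`. With `4 C_γ² η² = α B` the error
recursion becomes the contraction `eₜ₊₁ ≤ (1 - α) eₜ + α/2 ‖gₜ‖² + α ε²/3`; summing it, the
`‖gₜ‖²` terms are paid for by the `η/4 ‖gₜ‖²` gain, and telescoping both recursions gives
`∑ ‖∇f(ξₜ)‖² ≤ 2 (f* - f(ξ₀))/η + e₀/α + T ε²/3`. The lower bound on `T` makes the first two
terms at most `T ε²/3` and `T ε²/6`.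
-/

open Finset
open scoped RealInnerProductSpace

section Smoothness

variable {E : Type*} [NormedAddCommGroup E] [InnerProductSpace ℝ E] [CompleteSpace E]
  {f : E → ℝ} {L : ℝ}

theorem hasDerivAt_apply_add_smul (hf : Differentiable ℝ f) (x d : E) (t : ℝ) :
    HasDerivAt (fun s : ℝ => f (x + s • d)) ⟪gradient f (x + t • d), d⟫ t := by
  have hline : HasDerivAt (fun s : ℝ => x + s • d) d t := by
    simpa using ((hasDerivAt_id t).smul_const d).const_add x
  simpa [InnerProductSpace.toDual_apply_apply, Function.comp_def] using
    (hf (x + t • d)).hasGradientAt.hasFDerivAt.comp_hasDerivAt t hline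

theorem quadratic_lower_bound_of_lipschitz_gradient (hf : Differentiable ℝ f)
    (hlip : ∀ x y : E, ‖gradient f x - gradient f y‖ ≤ L * ‖x - y‖) (x d : E) :
    f x + ⟪gradient f x, d⟫ - L / 2 * ‖d‖ ^ 2 ≤ f (x + d) := by
  set φ : ℝ → ℝ := fun t => f (x + t • d) - t * ⟪gradient f x, d⟫ + L / 2 * ‖d‖ ^ 2 * t ^ 2
  have hφ : ∀ t, HasDerivAt φ
      (L * ‖d‖ ^ 2 * t - ⟪gradient f x - gradient f (x + t • d), d⟫) t := by
    intro t
    have h := ((hasDerivAt_apply_add_smul hf x d t).sub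
      (hasDerivAt_mul_const ⟪gradient f x, d⟫)).add
      ((hasDerivAt_pow 2 t).const_mul (L / 2 * ‖d‖ ^ 2))
    exact h.congr_deriv (by rw [inner_sub_left]; push_cast; ring)
  have hφ' : ∀ t ∈ interior (Set.Ici (0 : ℝ)),
      0 ≤ L * ‖d‖ ^ 2 * t - ⟪gradient f x - gradient f (x + t • d), d⟫ := by
    intro t ht
    rw [interior_Ici, Set.mem_Ioi] at ht
    have hdist : ‖x - (x + t • d)‖ = t * ‖d‖ := by
      rw [sub_add_cancel_left, norm_neg, norm_smul, Real.norm_of_nonneg ht.le]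
    rw [sub_nonneg]
    calc ⟪gradient f x - gradient f (x + t • d), d⟫
        ≤ ‖gradient f x - gradient f (x + t • d)‖ * ‖d‖ := real_inner_le_norm _ _
      _ ≤ L * ‖x - (x + t • d)‖ * ‖d‖ := by gcongr; exact hlip _ _
      _ = L * ‖d‖ ^ 2 * t := by rw [hdist]; ring
  have hmono : MonotoneOn φ (Set.Ici 0) :=
    monotoneOn_of_hasDerivWithinAt_nonneg (convex_Ici 0)
      (fun t _ => (hφ t).continuousAt.continuousWithinAt)
      (fun t _ => (hφ t).hasDerivWithinAt) hφ'
  have h01 := hmono Set.self_mem_Ici (Set.mem_Ici.mpr zero_le_one) zero_le_one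
  simp only [φ, zero_smul, add_zero, zero_mul, sub_zero, one_smul, one_mul, one_pow, ne_eq,
    OfNat.ofNat_ne_zero, not_false_eq_true, zero_pow, mul_zero] at h01
  linarith

theorem gradient_ascent_step_lower_bound (hf : Differentiable ℝ f)
    (hlip : ∀ x y : E, ‖gradient f x - gradient f y‖ ≤ L * ‖x - y‖)
    {η : ℝ} (hη : 0 ≤ η) (hηL : η * L ≤ 1 / 2) (x v : E) :
    f x + η / 2 * ‖gradient f x‖ ^ 2 + η / 4 * ‖v‖ ^ 2 - η / 2 * ‖v - gradient f x‖ ^ 2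
      ≤ f (x + η • v) := by
  have h := quadratic_lower_bound_of_lipschitz_gradient hf hlip x (η • v)
  rw [real_inner_smul_right, norm_smul, Real.norm_of_nonneg hη] at h
  -- polarization trades `⟪∇f x, v⟫` for `‖v - ∇f x‖²`; `η L ≤ 1/2` leaves `η/4 ‖v‖²` of the gain
  have hpolar := norm_sub_sq_real v (gradient f x)
  rw [real_inner_comm] at hpolar
  have hcoef : 0 ≤ (η / 4 - L / 2 * η ^ 2) * ‖v‖ ^ 2 := by
    have : L / 2 * η ^ 2 ≤ η / 4 := by nlinarith
    exact mul_nonneg (by linarith) (sq_nonneg _)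
  nlinarith

end Smoothness

theorem sum_range_le_sub_of_add_le {α : Type*} [AddCommGroup α] [PartialOrder α]
    [IsOrderedAddMonoid α] {a c : ℕ → α} {m : ℕ} (h : ∀ t < m, a t + c t ≤ a (t + 1)) :
    ∑ t ∈ range m, c t ≤ a m - a 0 := by
  rw [← sum_range_sub]
  exact sum_le_sum fun t ht => le_sub_iff_add_le'.mpr (h t (mem_range.mp ht))

theorem mul_sum_range_le_of_le_one_sub_mul_add {e b : ℕ → ℝ} {α : ℝ} {T : ℕ} (he : 0 ≤ e T)
    (h : ∀ t < T, e (t + 1) ≤ (1 - α) * e t + b t) :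
    α * ∑ t ∈ range T, e t ≤ e 0 + ∑ t ∈ range T, b t := by
  have := sum_range_le_sub_of_add_le (a := fun t => -e t) (c := fun t => α * e t - b t)
    fun t ht => by linarith [h t ht]
  rw [sum_sub_distrib, ← mul_sum] at this
  linarith

theorem storm_pg_sum_sq_norm_gradient_le
    {E : Type*} [NormedAddCommGroup E] [InnerProductSpace ℝ E] [CompleteSpace E]
    {f : E → ℝ} {fstar L η α B C σ : ℝ} {ξ g : ℕ → E} {T : ℕ}
    (hf : Differentiable ℝ f)
    (hlip : ∀ x y : E, ‖gradient f x - gradient f y‖ ≤ L * ‖x - y‖)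
    (hbdd : ∀ x : E, f x ≤ fstar)
    (hη : 0 < η) (hηL : η * L ≤ 1 / 2) (hα : 0 < α) (hα1 : α ≤ 1) (hB : 0 < B)
    (hCη : 4 * C ^ 2 * η ^ 2 ≤ α * B)
    (hupd : ∀ t : ℕ, ξ (t + 1) = ξ t + η • g t)
    (hrec : ∀ t < T, ‖g (t + 1) - gradient f (ξ (t + 1))‖ ^ 2 ≤
      (1 - α) ^ 2 * ‖g t - gradient f (ξ t)‖ ^ 2
        + (2 * η ^ 2 * (1 - α) ^ 2 * C ^ 2 / B) * ‖g t‖ ^ 2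
        + 2 * α ^ 2 * σ ^ 2 / B) :
    ∑ t ∈ range T, ‖gradient f (ξ t)‖ ^ 2 ≤
      2 * (fstar - f (ξ 0)) / η + ‖g 0 - gradient f (ξ 0)‖ ^ 2 / α
        + T * (2 * α * σ ^ 2 / B) := by
  set e : ℕ → ℝ := fun t => ‖g t - gradient f (ξ t)‖ ^ 2
  set c := 2 * α * σ ^ 2 / B
  have hcontract : ∀ t < T, e (t + 1) ≤ (1 - α) * e t + (α / 2 * ‖g t‖ ^ 2 + α * c) := by
    intro t ht
    have hsq : (1 - α) ^ 2 * e t ≤ (1 - α) * e t := by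
      gcongr; nlinarith
    have hcoef : 2 * η ^ 2 * (1 - α) ^ 2 * C ^ 2 / B * ‖g t‖ ^ 2 ≤ α / 2 * ‖g t‖ ^ 2 := by
      refine mul_le_mul_of_nonneg_right ?_ (sq_nonneg _)
      rw [div_le_iff₀ hB]
      nlinarith [sq_nonneg (η * C), mul_nonneg hα.le (sq_nonneg (η * C))]
    have hnoise : 2 * α ^ 2 * σ ^ 2 / B = α * c := by simp only [c]; ring
    linarith [hrec t ht]
  have herr := mul_sum_range_le_of_le_one_sub_mul_add (by positivity) hcontract
  rw [sum_add_distrib, ← mul_sum, sum_const, card_range, nsmul_eq_mul] at herr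
  have hascent := sum_range_le_sub_of_add_le (a := fun t => f (ξ t)) (m := T)
    (c := fun t => η / 2 * ‖gradient f (ξ t)‖ ^ 2 + η / 4 * ‖g t‖ ^ 2 - η / 2 * e t)
    fun t _ => by
      have := gradient_ascent_step_lower_bound hf hlip hη.le hηL (ξ t) (g t)
      rw [hupd t]
      linarith
  simp only [sum_sub_distrib, sum_add_distrib, ← mul_sum] at hascent
  have herr' : ∑ t ∈ range T, e t ≤ e 0 / α + (∑ t ∈ range T, ‖g t‖ ^ 2) / 2 + T * c := by
    refine le_of_mul_le_mul_left ?_ hα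
    rw [mul_add, mul_add, mul_div_cancel₀ _ hα.ne']
    linarith
  refine le_of_mul_le_mul_left ?_ (half_pos hη)
  have hΔ : η / 2 * (2 * (fstar - f (ξ 0)) / η) = fstar - f (ξ 0) := by field_simp
  rw [mul_add, mul_add, hΔ]
  linarith [mul_le_mul_of_nonneg_left herr' (half_pos hη).le, hbdd (ξ T)]

theorem storm_pg_ifo_parameter_choice_general
    {E : Type*} [NormedAddCommGroup E] [InnerProductSpace ℝ E] [CompleteSpace E]
    (f : E → ℝ) (fstar : ℝ) (L_d : ℝ)
    (hdiff : Differentiable ℝ f)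
    (hlip : ∀ x y : E, ‖gradient f x - gradient f y‖ ≤ L_d * ‖x - y‖)
    (hbdd : ∀ x : E, f x ≤ fstar)
    (ε : ℝ) (hε : 0 < ε) (σ : ℝ) (hσ : 0 < σ) (C_γ : ℝ) (hC : 0 < C_γ)
    (B : ℝ) (hB : 0 < B)
    (α η : ℝ)
    (hαdef : α = ε ^ 2 * B / (6 * σ ^ 2))
    (hηdef : η = ε * B / (2 * Real.sqrt 6 * σ * C_γ))
    (hα1 : α ≤ 1) (hηL : η * L_d ≤ 1 / 2)
    (S₀ : ℝ) (hS₀ : 0 < S₀)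
    (ξ g : ℕ → E) (hupd : ∀ t : ℕ, ξ (t + 1) = ξ t + η • g t)
    (T : ℕ)
    (hT : max (6 * (fstar - f (ξ 0)) / (η * ε ^ 2)) (6 * σ ^ 2 / (S₀ * α * ε ^ 2))
      ≤ (T : ℝ))
    (hinit : ‖g 0 - gradient f (ξ 0)‖ ^ 2 ≤ σ ^ 2 / S₀)
    (hrec : ∀ t < T, ‖g (t + 1) - gradient f (ξ (t + 1))‖ ^ 2 ≤
      (1 - α) ^ 2 * ‖g t - gradient f (ξ t)‖ ^ 2
        + (2 * η ^ 2 * (1 - α) ^ 2 * C_γ ^ 2 / B) * ‖g t‖ ^ 2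
        + 2 * α ^ 2 * σ ^ 2 / B) :
    4 * C_γ ^ 2 * η ^ 2 = α * B ∧
    2 * α * σ ^ 2 / B = ε ^ 2 / 3 ∧
    (1 / (T : ℝ)) * ∑ t ∈ range T, ‖gradient f (ξ t)‖ ^ 2 ≤ ε ^ 2 := by
  have hα : 0 < α := by rw [hαdef]; positivity
  have hη : 0 < η := by rw [hηdef]; positivity
  have hCη : 4 * C_γ ^ 2 * η ^ 2 = α * B := by
    simp only [hαdef, hηdef, div_pow, mul_pow]
    rw [Real.sq_sqrt (by norm_num)]
    field_simp
    ring
  have hnoise : 2 * α * σ ^ 2 / B = ε ^ 2 / 3 := by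
    rw [hαdef]; field_simp; ring
  refine ⟨hCη, hnoise, ?_⟩
  have hsum := storm_pg_sum_sq_norm_gradient_le hdiff hlip hbdd hη hηL hα hα1 hB hCη.le hupd hrec
  rw [hnoise] at hsum
  have hT₁ : 2 * (fstar - f (ξ 0)) / η ≤ T * ε ^ 2 / 3 := by
    have h := (le_max_left _ _).trans hT
    rw [div_le_iff₀ (by positivity)] at h
    rw [div_le_iff₀ hη]
    linarith
  have hT₂ : ‖g 0 - gradient f (ξ 0)‖ ^ 2 / α ≤ T * ε ^ 2 / 6 := by
    have h := (le_max_right _ _).trans hT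
    rw [div_le_iff₀ (by positivity)] at h
    rw [div_le_iff₀ hα]
    calc ‖g 0 - gradient f (ξ 0)‖ ^ 2 ≤ σ ^ 2 / S₀ := hinit
      _ ≤ T * ε ^ 2 / 6 * α := by rw [div_le_iff₀ hS₀]; linarith
  have hTpos : (0 : ℝ) < T := lt_of_lt_of_le (by positivity) ((le_max_right _ _).trans hT)
  rw [one_div, inv_mul_le_iff₀ hTpos]
  nlinarith

/-- Corollary (IFO complexity parameter choice) for STORM-PG. -/
theorem storm_pg_ifo_parameter_choice
    {E : Type*} [NormedAddCommGroup E] [InnerProductSpace ℝ E] [CompleteSpace E]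
    (f : E → ℝ) (fstar : ℝ) (L_d : ℝ) (hL_d : 0 < L_d)
    (hdiff : Differentiable ℝ f)
    (hlip : ∀ x y : E, ‖gradient f x - gradient f y‖ ≤ L_d * ‖x - y‖)
    (hbdd : ∀ x : E, f x ≤ fstar)
    (ε : ℝ) (hε : 0 < ε) (σ : ℝ) (hσ : 0 < σ) (C_γ : ℝ) (hC : 0 < C_γ)
    (B : ℝ) (hB : 0 < B)
    (α η : ℝ)
    (hαdef : α = ε ^ 2 * B / (6 * σ ^ 2))
    (hηdef : η = ε * B / (2 * Real.sqrt 6 * σ * C_γ))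
    (hα1 : α ≤ 1) (hηL : η * L_d ≤ 1 / 2)
    (S₀ : ℝ) (hS₀ : 0 < S₀)
    (ξ g : ℕ → E) (hupd : ∀ t : ℕ, ξ (t + 1) = ξ t + η • g t)
    (T : ℕ)
    (hT : max (6 * (fstar - f (ξ 0)) / (η * ε ^ 2)) (6 * σ ^ 2 / (S₀ * α * ε ^ 2))
      ≤ (T : ℝ))
    (hinit : ‖g 0 - gradient f (ξ 0)‖ ^ 2 ≤ σ ^ 2 / S₀)
    (hrec : ∀ t < T, ‖g (t + 1) - gradient f (ξ (t + 1))‖ ^ 2 ≤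
      (1 - α) ^ 2 * ‖g t - gradient f (ξ t)‖ ^ 2
        + (2 * η ^ 2 * (1 - α) ^ 2 * C_γ ^ 2 / B) * ‖g t‖ ^ 2
        + 2 * α ^ 2 * σ ^ 2 / B) :
    4 * C_γ ^ 2 * η ^ 2 = α * B ∧
    2 * α * σ ^ 2 / B = ε ^ 2 / 3 ∧
    (1 / (T : ℝ)) * ∑ t ∈ range T, ‖gradient f (ξ t)‖ ^ 2 ≤ ε ^ 2 :=
  storm_pg_ifo_parameter_choice_general f fstar L_d hdiff hlip hbdd ε hε σ hσ C_γ hC B hB α η hαdef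
    hηdef hα1 hηL S₀ hS₀ ξ g hupd T hT hinit hrec
end

section
/- Lemma (accumulated estimation error bound, Lemma 5.3): Let α ∈ (0,1], and let η, C, B > 0 and σ ≥ 0 be constants. Let e_t ≥ 0 and G_t ≥ 0 be real sequences such that for every t < T, e_{t+1} ≤ (1−α)²·e_t + (2η²(1−α)²C²/B)·G_t + 2α²σ²/B. Then Σ_{t=0}^{T−1} e_t ≤ (2/α)·[ (C²η²/B)·Σ_{t=0}^{T−1} G_t + T·α²·σ²/B + e_0 ]. -/
open Finset

/-- Lemma 5.3: accumulated estimation error bound. -/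
theorem storm_pg_accumulated_error
    (α : ℝ) (hα0 : 0 < α) (hα1 : α ≤ 1)
    (η C B : ℝ) (hη : 0 < η) (hC : 0 < C) (hB : 0 < B)
    (σ : ℝ) (hσ : 0 ≤ σ)
    (e G : ℕ → ℝ) (he : ∀ t, 0 ≤ e t) (hG : ∀ t, 0 ≤ G t)
    (T : ℕ)
    (hrec : ∀ t < T, e (t + 1) ≤
      (1 - α) ^ 2 * e t + (2 * η ^ 2 * (1 - α) ^ 2 * C ^ 2 / B) * G t
        + 2 * α ^ 2 * σ ^ 2 / B) :
    ∑ t ∈ range T, e t ≤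
      (2 / α) * ((C ^ 2 * η ^ 2 / B) * ∑ t ∈ range T, G t
        + (T : ℝ) * α ^ 2 * σ ^ 2 / B + e 0) := by
  set S := ∑ t ∈ range T, e t with hS
  set SG := ∑ t ∈ range T, G t with hSG
  have hSnn : 0 ≤ S := Finset.sum_nonneg fun t _ => he t
  have hSGnn : 0 ≤ SG := Finset.sum_nonneg fun t _ => hG t
  have h1 : ∑ t ∈ range T, e (t + 1) ≤
      (1 - α) ^ 2 * S + (2 * η ^ 2 * (1 - α) ^ 2 * C ^ 2 / B) * SG
        + (T : ℝ) * (2 * α ^ 2 * σ ^ 2 / B) := by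
    calc ∑ t ∈ range T, e (t + 1)
        ≤ ∑ t ∈ range T, ((1 - α) ^ 2 * e t
            + (2 * η ^ 2 * (1 - α) ^ 2 * C ^ 2 / B) * G t
            + 2 * α ^ 2 * σ ^ 2 / B) := by
          exact Finset.sum_le_sum fun t ht => hrec t (Finset.mem_range.mp ht)
      _ = (1 - α) ^ 2 * S + (2 * η ^ 2 * (1 - α) ^ 2 * C ^ 2 / B) * SG
            + (T : ℝ) * (2 * α ^ 2 * σ ^ 2 / B) := by
          rw [Finset.sum_add_distrib, Finset.sum_add_distrib, ← Finset.mul_sum,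
            ← Finset.mul_sum, Finset.sum_const, Finset.card_range, nsmul_eq_mul, hS, hSG]
  have h2 : S - e 0 ≤ ∑ t ∈ range T, e (t + 1) := by
    have := Finset.sum_range_succ' e T
    have h3 := Finset.sum_range_succ e T
    have := he T
    linarith [h3 ▸ (Finset.sum_range_succ' e T)]
  have key : S - e 0 ≤ (1 - α) ^ 2 * S
      + (2 * η ^ 2 * (1 - α) ^ 2 * C ^ 2 / B) * SG
      + (T : ℝ) * (2 * α ^ 2 * σ ^ 2 / B) := le_trans h2 h1
  -- clear denominators
  rw [div_mul_eq_mul_div, le_div_iff₀ hα0]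
  have hBkey : B * (S - e 0) ≤ B * ((1 - α) ^ 2 * S
      + (2 * η ^ 2 * (1 - α) ^ 2 * C ^ 2 / B) * SG
      + (T : ℝ) * (2 * α ^ 2 * σ ^ 2 / B)) :=
    mul_le_mul_of_nonneg_left key hB.le
  have hBne : B ≠ 0 := hB.ne'
  have hBkey' : B * S - B * e 0 ≤ (1 - α) ^ 2 * B * S
      + 2 * η ^ 2 * (1 - α) ^ 2 * C ^ 2 * SG + (T : ℝ) * (2 * α ^ 2 * σ ^ 2) := by
    field_simp at hBkey
    nlinarith [hBkey]
  have goal' : α * B * S ≤ 2 * (C ^ 2 * η ^ 2 * SG + (T : ℝ) * α ^ 2 * σ ^ 2 + B * e 0) := by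
    have h1a : (0:ℝ) ≤ 1 - α := by linarith
    have ha : 0 ≤ α * (1 - α) * (B * S) :=
      mul_nonneg (mul_nonneg hα0.le h1a) (mul_nonneg hB.le hSnn)
    have hb : 0 ≤ η ^ 2 * C ^ 2 * SG * (α * (2 - α)) := by
      apply mul_nonneg (mul_nonneg (mul_nonneg (sq_nonneg η) (sq_nonneg C)) hSGnn)
      apply mul_nonneg hα0.le; linarith
    have hc : 0 ≤ B * e 0 := mul_nonneg hB.le (he 0)
    nlinarith [hBkey', ha, hb, hc]
  have hconv : S * α = α * S := mul_comm _ _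
  rw [hconv]
  have : (C ^ 2 * η ^ 2 / B * SG + ↑T * α ^ 2 * σ ^ 2 / B + e 0)
      = (C ^ 2 * η ^ 2 * SG + ↑T * α ^ 2 * σ ^ 2 + B * e 0) / B := by
    field_simp
  rw [this, ← mul_div_assoc, le_div_iff₀ hB]
  nlinarith [goal']
end
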